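/- arXiv:1304.2534 — 3 statements merged into one kernel-verified Lean document; each statement's English description precedes it below -/
import Mathlib

section
/- (Noncommutative de Rham cohomology of ℝ³_λ, degree 3.) For every λ ∈ ℂ, every 3-form is exact: the map d₂ : Ω² → Ω³ is surjective. That is, H³ = {0}. -/
noncomputable section
open TensorProduct

/-- The bracket of `g_λ` on coordinates: `[x₁,x₂] = 2λx₂`, `[x₁,x₃] = 2λx₃`, `[x₂,x₃] = 0`. -/
def gbr (l : ℂ) (u v : Fin 3 → ℂ) : Fin 3 → ℂ :=
  ![0, 2 * l * (u 0 * v 1 - u 1 * v 0), 2 * l * (u 0 * v 2 - u 2 * v 0)]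

lemma gbr_add_left (l : ℂ) (u v w : Fin 3 → ℂ) :
    gbr l (u + v) w = gbr l u w + gbr l v w := by
  funext i; fin_cases i <;> simp [gbr] <;> ring

lemma gbr_add_right (l : ℂ) (u v w : Fin 3 → ℂ) :
    gbr l u (v + w) = gbr l u v + gbr l u w := by
  funext i; fin_cases i <;> simp [gbr] <;> ring

lemma gbr_self (l : ℂ) (u : Fin 3 → ℂ) : gbr l u u = 0 := by
  funext i; fin_cases i <;> simp [gbr] <;> ring_nf <;> tauto

lemma gbr_leibniz (l : ℂ) (u v w : Fin 3 → ℂ) :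
    gbr l u (gbr l v w) = gbr l (gbr l u v) w + gbr l v (gbr l u w) := by
  funext i; fin_cases i <;> simp [gbr] <;> ring

lemma gbr_smul_right (l c : ℂ) (u v : Fin 3 → ℂ) :
    gbr l u (c • v) = c • gbr l u v := by
  funext i; fin_cases i <;> simp [gbr] <;> ring

/-- The underlying type of the Lie algebra `g_λ`. -/
def G (_l : ℂ) : Type := Fin 3 → ℂ

instance (l : ℂ) : AddCommGroup (G l) := inferInstanceAs (AddCommGroup (Fin 3 → ℂ))
instance (l : ℂ) : Module ℂ (G l) := inferInstanceAs (Module ℂ (Fin 3 → ℂ))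

instance (l : ℂ) : LieRing (G l) :=
  { (inferInstance : AddCommGroup (G l)) with
    bracket := fun u v => gbr l u v
    add_lie := fun u v w => gbr_add_left l u v w
    lie_add := fun u v w => gbr_add_right l u v w
    lie_self := fun u => gbr_self l u
    leibniz_lie := fun u v w => gbr_leibniz l u v w }

instance (l : ℂ) : LieAlgebra ℂ (G l) :=
  { (inferInstance : Module ℂ (G l)) with
    lie_smul := fun c u v => gbr_smul_right l c u v }

/-- The universal enveloping algebra `U_λ`. -/
abbrev Uenv (l : ℂ) := UniversalEnvelopingAlgebra ℂ (G l)

attribute [local instance] LieRing.ofAssociativeRing LieAlgebra.ofAssociativeAlgebra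

/-- The canonical embedding `ι : g_λ → U_λ`. -/
def iotaU (l : ℂ) : G l →ₗ⁅ℂ⁆ Uenv l := UniversalEnvelopingAlgebra.ι ℂ

/-- The basis vector `x_a` of `g_λ` (0-indexed). -/
def xvec (l : ℂ) (a : Fin 3) : G l := (Pi.single a 1 : Fin 3 → ℂ)

/-- The generator `x_a` inside `U_λ`. -/
def Xgen (l : ℂ) (a : Fin 3) : Uenv l := iotaU l (xvec l a)

abbrev V3 := Fin 3 → ℂ

/-- `Ω¹ = ℂ³ ⊗ U_λ`. -/
abbrev Om1 (l : ℂ) := V3 ⊗[ℂ] Uenv l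

/-- The representation matrices `ρ(x₁) = λ diag(1,1,-1)`, `ρ(x₂) = λE₁₃`, `ρ(x₃) = λE₂₃`. -/
def rhoM (l : ℂ) : Fin 3 → Matrix (Fin 3) (Fin 3) ℂ :=
  ![l • Matrix.diagonal ![1, 1, -1],
    l • Matrix.single 0 2 1,
    l • Matrix.single 1 2 1]

/-- The representation `ρ` on a general element of `g_λ`. -/
def rhoLin (l : ℂ) (u : G l) : Matrix (Fin 3) (Fin 3) ℂ :=
  u 0 • rhoM l 0 + u 1 • rhoM l 1 + u 2 • rhoM l 2

/-- Right action of `U_λ` on `Ω¹`: `(v ⊗ u)·w = v ⊗ (u*w)`. -/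
def rAct (l : ℂ) (w : Uenv l) : Om1 l →ₗ[ℂ] Om1 l :=
  LinearMap.lTensor V3 (LinearMap.mulRight ℂ w)

/-- Left action of `x ∈ g_λ` on `Ω¹`: `x·(v ⊗ u) = ρ(x)v ⊗ u + v ⊗ (x*u)`. -/
def lActVec (l : ℂ) (x : G l) : Om1 l →ₗ[ℂ] Om1 l :=
  LinearMap.rTensor (Uenv l) (Matrix.toLin' (rhoLin l x)) +
    LinearMap.lTensor V3 (LinearMap.mulLeft ℂ (iotaU l x))

/-- The invariant 1-forms: `dx₁ = -e₃`, `dx₂ = e₁`, `dx₃ = e₂` (as vectors in `ℂ³`). -/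
def omegaV : Fin 3 → V3 :=
  ![-(Pi.single 2 1), Pi.single 0 1, Pi.single 1 1]

/-- The basic 1-forms `dx_a = ω_a ⊗ 1  ∈ Ω¹`. -/
def dx (l : ℂ) (a : Fin 3) : Om1 l := (omegaV a) ⊗ₜ[ℂ] (1 : Uenv l)


abbrev ExtA := ExteriorAlgebra ℂ V3

/-- Wedge of a vector with a vector, landing in `Λ²ℂ³`. -/
def wedge1 (v : V3) : V3 →ₗ[ℂ] ⋀[ℂ]^2 V3 where
  toFun w := ⟨ExteriorAlgebra.ι ℂ v * ExteriorAlgebra.ι ℂ w, by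
    show _ ∈ (LinearMap.range (ExteriorAlgebra.ι ℂ : V3 →ₗ[ℂ] ExtA)) ^ 2
    rw [sq]
    exact Submodule.mul_mem_mul (LinearMap.mem_range_self _ v) (LinearMap.mem_range_self _ w)⟩
  map_add' w₁ w₂ := by ext; simp [mul_add]
  map_smul' c w := by ext; simp [Algebra.mul_smul_comm]

/-- Wedge of a 2-vector with a vector, landing in `Λ³ℂ³`. -/
def wedge2 (b : ⋀[ℂ]^2 V3) : V3 →ₗ[ℂ] ⋀[ℂ]^3 V3 where
  toFun w := ⟨(b : ExtA) * ExteriorAlgebra.ι ℂ w, by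
    show _ ∈ (LinearMap.range (ExteriorAlgebra.ι ℂ : V3 →ₗ[ℂ] ExtA)) ^ 3
    rw [pow_succ]
    exact Submodule.mul_mem_mul b.2 (LinearMap.mem_range_self _ w)⟩
  map_add' w₁ w₂ := by ext; simp [mul_add]
  map_smul' c w := by ext; simp [Algebra.mul_smul_comm]

/-- `Ω² = Λ²ℂ³ ⊗ U_λ`. -/
abbrev Om2 (l : ℂ) := (⋀[ℂ]^2 V3) ⊗[ℂ] Uenv l

/-- `Ω³ = Λ³ℂ³ ⊗ U_λ`. -/
abbrev Om3 (l : ℂ) := (⋀[ℂ]^3 V3) ⊗[ℂ] Uenv l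

/-!
The space `Λ³ℂ³` is spanned by `e₁ ∧ e₂ ∧ e₃`, and `d₂((e₂ ∧ e₃) ⊗ v) = (e₁ ∧ e₂ ∧ e₃) ⊗ ∂v`,
where `∂v` is the `e₁`-coefficient of `dv`, a partial derivative along `x₂` (as `dx₂ = e₁ ⊗ 1`).
So it suffices that `∂` is onto `U_λ`. The Leibniz rule gives
`∂(x₂^(k+1) u) = (k+1) x₂^k u + x₂^(k+1) ∂u + (k+1) λ x₂^k ∂'u`, with `∂'u` the
`e₃`-coefficient of `du`, and `∂`, `∂'` lower the filtration `Fₙ = (ℂ + g_λ)ⁿ` of `U_λ` by one.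
By induction on `n`, dividing by `k + 1`, every `x₂^k u` with `u ∈ Fₙ` lies in the image of `∂`.
Indices start at `0` in the code: `∂ = partialDeriv d 0`, `∂' = partialDeriv d 2`, `x₂ = Xgen l 1`.
-/

namespace exteriorPower

variable {R M : Type*} [CommRing R] [AddCommGroup M] [Module R M] {n : ℕ}

theorem ιMulti_eq_det_smul (e : Module.Basis (Fin n) R M) (v : Fin n → M) :
    ιMulti R n v = e.det v • ιMulti R n e := by
  suffices ιMulti R n = e.det.smulRight (ιMulti R n e) from DFunLike.congr_fun this v
  refine e.ext_alternating fun i hi => ?_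
  let σ : Equiv.Perm (Fin n) := Equiv.ofBijective i (Finite.injective_iff_bijective.1 hi)
  change ιMulti R n (e ∘ σ) = e.det (e ∘ σ) • ιMulti R n e
  simp [AlternatingMap.map_perm, Module.Basis.det_self]

theorem exists_eq_smul_ιMulti_basis (e : Module.Basis (Fin n) R M) (x : ⋀[R]^n M) :
    ∃ c : R, x = c • ιMulti R n e := by
  have hspan : ⊤ ≤ Submodule.span R {ιMulti R n e} := by
    rw [← ιMulti_span, Submodule.span_le]
    rintro _ ⟨v, rfl⟩
    rw [ιMulti_eq_det_smul e v]
    exact Submodule.smul_mem _ _ (Submodule.mem_span_singleton_self _)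
  exact (Submodule.mem_span_singleton.mp (hspan Submodule.mem_top)).imp fun _ h => h.symm

end exteriorPower

namespace UniversalEnvelopingAlgebra

variable (R L : Type*) [CommRing R] [LieRing L] [LieAlgebra R L]

def degLeOne : Submodule R (UniversalEnvelopingAlgebra R L) :=
  1 ⊔ LinearMap.range (ι R : L →ₗ⁅R⁆ UniversalEnvelopingAlgebra R L).toLinearMap

theorem degLeOne_pow_mono : Monotone (degLeOne R L ^ ·) := pow_right_monotone le_sup_left

variable {R L} in
theorem mem_degLeOne {u : UniversalEnvelopingAlgebra R L} :
    u ∈ degLeOne R L ↔ ∃ (c : R) (x : L), u = algebraMap R _ c + ι R x := by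
  simp only [degLeOne, Submodule.mem_sup, Submodule.mem_one, LinearMap.mem_range]
  constructor
  · rintro ⟨_, ⟨c, rfl⟩, _, ⟨x, rfl⟩, rfl⟩
    exact ⟨c, x, rfl⟩
  · rintro ⟨c, x, rfl⟩
    exact ⟨_, ⟨c, rfl⟩, _, ⟨x, rfl⟩, rfl⟩

theorem ι_mem_degLeOne (x : L) : ι R x ∈ degLeOne R L := Submodule.mem_sup_right ⟨x, rfl⟩

theorem exists_mem_degLeOne_pow (u : UniversalEnvelopingAlgebra R L) :
    ∃ n : ℕ, u ∈ degLeOne R L ^ n := by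
  obtain ⟨t, rfl⟩ : ∃ t, mkAlgHom R L t = u := RingCon.mkₐ_surjective _ u
  induction t using TensorAlgebra.induction with
  | algebraMap r => exact ⟨0, by rw [AlgHom.commutes, pow_zero]; exact Submodule.algebraMap_mem r⟩
  | ι x => exact ⟨1, by rw [pow_one]; exact ι_mem_degLeOne R L x⟩
  | mul _ _ ha hb =>
    obtain ⟨m, hm⟩ := ha
    obtain ⟨n, hn⟩ := hb
    exact ⟨m + n, by rw [map_mul, pow_add]; exact Submodule.mul_mem_mul hm hn⟩
  | add _ _ ha hb =>
    obtain ⟨m, hm⟩ := ha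
    obtain ⟨n, hn⟩ := hb
    exact ⟨m + n, by
      rw [map_add]
      exact add_mem (degLeOne_pow_mono R L (Nat.le_add_right m n) hm)
        (degLeOne_pow_mono R L (Nat.le_add_left n m) hn)⟩

end UniversalEnvelopingAlgebra

namespace Om1

variable {l : ℂ}

def coeff (i : Fin 3) : Om1 l →ₗ[ℂ] Uenv l :=
  TensorProduct.lid ℂ (Uenv l) ∘ₗ (LinearMap.proj i).rTensor (Uenv l)

@[simp]
theorem coeff_tmul (i : Fin 3) (v : V3) (u : Uenv l) : coeff i (v ⊗ₜ[ℂ] u) = v i • u := by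
  simp [coeff]

theorem coeff_rTensor_toLin' (A : Matrix (Fin 3) (Fin 3) ℂ) (i : Fin 3) (t : Om1 l) :
    coeff i ((Matrix.toLin' A).rTensor (Uenv l) t) = ∑ j, A i j • coeff j t := by
  induction t using TensorProduct.induction_on with
  | zero => simp
  | tmul v u => simp [Matrix.mulVec, dotProduct, Finset.sum_smul, smul_smul]
  | add s t hs ht => simp [hs, ht, Finset.sum_add_distrib]

theorem coeff_lTensor_mulLeft (a : Uenv l) (i : Fin 3) (t : Om1 l) :
    coeff i ((LinearMap.mulLeft ℂ a).lTensor V3 t) = a * coeff i t := by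
  induction t using TensorProduct.induction_on with
  | zero => simp
  | tmul v u => simp
  | add s t hs ht => simp [hs, ht, mul_add]

theorem coeff_rAct (w : Uenv l) (i : Fin 3) (t : Om1 l) :
    coeff i (rAct l w t) = coeff i t * w := by
  induction t using TensorProduct.induction_on with
  | zero => simp
  | tmul v u => simp [rAct]
  | add s t hs ht => simp [hs, ht, add_mul]

end Om1

def partialDeriv {l : ℂ} (d : Uenv l →ₗ[ℂ] Om1 l) (i : Fin 3) : Uenv l →ₗ[ℂ] Uenv l :=
  Om1.coeff i ∘ₗ d

section Differential

variable {l : ℂ} {Φ : Uenv l →ₐ[ℂ] Module.End ℂ (Om1 l)} {d : Uenv l →ₗ[ℂ] Om1 l}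
  (hΦ : ∀ x : G l, Φ (iotaU l x) = lActVec l x) (hd1 : d 1 = 0)
  (hdx : ∀ a : Fin 3, d (Xgen l a) = dx l a)
  (hleib : ∀ u v : Uenv l, d (u * v) = Φ u (d v) + rAct l v (d u))

theorem iotaU_eq_sum (x : G l) : iotaU l x = ∑ a, x a • Xgen l a := by
  have hx : x = ∑ a, x a • xvec l a := by
    change (x : Fin 3 → ℂ) = ∑ a, x a • (Pi.single a 1 : Fin 3 → ℂ)
    funext i; fin_cases i <;> simp [Fin.sum_univ_three]
  conv_lhs => rw [hx]
  simp [Xgen]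

include hd1 in
theorem partialDeriv_one (i : Fin 3) : partialDeriv d i 1 = 0 := by
  simp [partialDeriv, hd1]

include hdx in
theorem partialDeriv_Xgen (i a : Fin 3) : partialDeriv d i (Xgen l a) = omegaV a i • 1 := by
  simp [partialDeriv, hdx, dx]

include hdx in
theorem partialDeriv_iotaU_mem_one (i : Fin 3) (x : G l) :
    partialDeriv d i (iotaU l x) ∈ (1 : Submodule ℂ (Uenv l)) := by
  rw [iotaU_eq_sum, map_sum]
  refine Submodule.sum_mem _ fun a _ => ?_
  rw [map_smul, partialDeriv_Xgen hdx, smul_smul, Algebra.smul_def, mul_one]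
  exact Submodule.algebraMap_mem _

include hΦ hleib in
theorem partialDeriv_iotaU_mul (i : Fin 3) (x : G l) (u : Uenv l) :
    partialDeriv d i (iotaU l x * u) =
      ∑ j, rhoLin l x i j • partialDeriv d j u + iotaU l x * partialDeriv d i u
        + partialDeriv d i (iotaU l x) * u := by
  simp only [partialDeriv, LinearMap.comp_apply, hleib, hΦ, lActVec, LinearMap.add_apply,
    map_add, Om1.coeff_rTensor_toLin', Om1.coeff_lTensor_mulLeft, Om1.coeff_rAct]

open UniversalEnvelopingAlgebra in
include hΦ hd1 hdx hleib in
theorem partialDeriv_mem_degLeOne_pow (n : ℕ) (i : Fin 3) {u : Uenv l}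
    (hu : u ∈ degLeOne ℂ (G l) ^ (n + 1)) : partialDeriv d i u ∈ degLeOne ℂ (G l) ^ n := by
  induction n generalizing i u with
  | zero =>
    rw [zero_add, pow_one] at hu
    obtain ⟨c, x, rfl⟩ : ∃ (c : ℂ) (x : G l), u = algebraMap ℂ _ c + iotaU l x :=
      mem_degLeOne.mp hu
    rw [map_add, Algebra.algebraMap_eq_smul_one, map_smul, partialDeriv_one hd1, smul_zero,
      zero_add, pow_zero]
    exact partialDeriv_iotaU_mem_one hdx i x
  | succ n ih =>
    have hmono := degLeOne_pow_mono ℂ (G l) (Nat.le_succ n)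
    rw [pow_succ'] at hu
    induction hu using Submodule.mul_induction_on' with
    | mem_mul_mem g hg v hv =>
      obtain ⟨c, x, rfl⟩ : ∃ (c : ℂ) (x : G l), g = algebraMap ℂ _ c + iotaU l x :=
        mem_degLeOne.mp hg
      rw [add_mul, map_add, Algebra.algebraMap_eq_smul_one, smul_mul_assoc, one_mul, map_smul,
        partialDeriv_iotaU_mul hΦ hleib]
      refine add_mem (Submodule.smul_mem _ _ (hmono (ih i hv))) (add_mem (add_mem ?_ ?_) ?_)
      · exact Submodule.sum_mem _ fun j _ => Submodule.smul_mem _ _ (hmono (ih j hv))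
      · rw [pow_succ']
        exact Submodule.mul_mem_mul (ι_mem_degLeOne ℂ (G l) x) (ih i hv)
      · simpa using Submodule.mul_mem_mul (partialDeriv_iotaU_mem_one hdx i x) hv
    | add a _ b _ ha hb => rw [map_add]; exact add_mem ha hb

include hΦ hdx hleib

theorem partialDeriv_two_Xgen_one_mul (u : Uenv l) :
    partialDeriv d 2 (Xgen l 1 * u) = Xgen l 1 * partialDeriv d 2 u := by
  rw [Xgen, partialDeriv_iotaU_mul hΦ hleib, ← Xgen, partialDeriv_Xgen hdx]
  simp [rhoLin, rhoM, omegaV, xvec]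

theorem partialDeriv_zero_Xgen_one_mul (u : Uenv l) :
    partialDeriv d 0 (Xgen l 1 * u) =
      l • partialDeriv d 2 u + Xgen l 1 * partialDeriv d 0 u + u := by
  rw [Xgen, partialDeriv_iotaU_mul hΦ hleib, ← Xgen, partialDeriv_Xgen hdx]
  simp [Fin.sum_univ_three, rhoLin, rhoM, omegaV, xvec]

theorem partialDeriv_two_Xgen_one_pow_mul (k : ℕ) (u : Uenv l) :
    partialDeriv d 2 (Xgen l 1 ^ k * u) = Xgen l 1 ^ k * partialDeriv d 2 u := by
  induction k with
  | zero => simp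
  | succ k ih =>
    rw [pow_succ', mul_assoc, partialDeriv_two_Xgen_one_mul hΦ hdx hleib, ih, mul_assoc]

theorem partialDeriv_zero_Xgen_one_pow_succ_mul (k : ℕ) (u : Uenv l) :
    partialDeriv d 0 (Xgen l 1 ^ (k + 1) * u) =
      Xgen l 1 ^ (k + 1) * partialDeriv d 0 u
        + ((k + 1 : ℂ) * l) • (Xgen l 1 ^ k * partialDeriv d 2 u)
        + (k + 1 : ℂ) • (Xgen l 1 ^ k * u) := by
  induction k with
  | zero => simp [partialDeriv_zero_Xgen_one_mul hΦ hdx hleib]; abel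
  | succ k ih =>
    rw [pow_succ' _ (k + 1), mul_assoc, partialDeriv_zero_Xgen_one_mul hΦ hdx hleib, ih,
      partialDeriv_two_Xgen_one_pow_mul hΦ hdx hleib]
    simp only [mul_add, mul_smul_comm, ← mul_assoc, ← pow_succ']
    push_cast
    match_scalars <;> ring

theorem Xgen_one_pow_mul_mem_range {u : Uenv l}
    (h0 : ∀ k : ℕ, Xgen l 1 ^ k * partialDeriv d 0 u ∈ LinearMap.range (partialDeriv d 0))
    (h2 : ∀ k : ℕ, Xgen l 1 ^ k * partialDeriv d 2 u ∈ LinearMap.range (partialDeriv d 0))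
    (k : ℕ) : Xgen l 1 ^ k * u ∈ LinearMap.range (partialDeriv d 0) := by
  have hk : (k + 1 : ℂ) ≠ 0 := Nat.cast_add_one_ne_zero k
  have hsmul : (k + 1 : ℂ) • (Xgen l 1 ^ k * u) ∈ LinearMap.range (partialDeriv d 0) := by
    rw [eq_sub_of_add_eq' (partialDeriv_zero_Xgen_one_pow_succ_mul hΦ hdx hleib k u).symm]
    exact sub_mem (LinearMap.mem_range_self _ _)
      (add_mem (h0 (k + 1)) (Submodule.smul_mem _ _ (h2 k)))
  simpa [smul_smul, hk] using Submodule.smul_mem _ (k + 1 : ℂ)⁻¹ hsmul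

include hd1 in
open UniversalEnvelopingAlgebra in
theorem partialDeriv_zero_surjective : Function.Surjective (partialDeriv d 0) := by
  suffices h : ∀ n : ℕ, ∀ u ∈ degLeOne ℂ (G l) ^ n, ∀ k : ℕ,
      Xgen l 1 ^ k * u ∈ LinearMap.range (partialDeriv d 0) by
    intro u
    obtain ⟨n, hn⟩ := exists_mem_degLeOne_pow ℂ (G l) u
    simpa using h n u hn 0
  intro n
  induction n with
  | zero =>
    intro u hu
    obtain ⟨c, rfl⟩ := Submodule.mem_one.mp (pow_zero (degLeOne ℂ (G l)) ▸ hu)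
    have hc (i : Fin 3) : partialDeriv d i (algebraMap ℂ _ c) = 0 := by
      rw [Algebra.algebraMap_eq_smul_one, map_smul, partialDeriv_one hd1, smul_zero]
    exact Xgen_one_pow_mul_mem_range hΦ hdx hleib (by simp [hc]) (by simp [hc])
  | succ n ih =>
    intro u hu
    exact Xgen_one_pow_mul_mem_range hΦ hdx hleib
      (ih _ (partialDeriv_mem_degLeOne_pow hΦ hd1 hdx hleib n 0 hu))
      (ih _ (partialDeriv_mem_degLeOne_pow hΦ hd1 hdx hleib n 2 hu))

end Differential

theorem wedge2_wedge1 (a b c : V3) :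
    wedge2 (wedge1 a b) c = exteriorPower.ιMulti ℂ 3 ![a, b, c] := by
  ext
  simp [wedge1, wedge2, exteriorPower.ιMulti_apply_coe, ExteriorAlgebra.ιMulti_apply, mul_assoc]

theorem wedge2_wedge1_single_one_single_two (w : V3) :
    wedge2 (wedge1 (Pi.single 1 1) (Pi.single 2 1)) w =
      w 0 • exteriorPower.ιMulti ℂ 3 (Pi.basisFun ℂ (Fin 3)) := by
  rw [wedge2_wedge1, exteriorPower.ιMulti_eq_det_smul (Pi.basisFun ℂ (Fin 3))]
  congr 1
  rw [Pi.basisFun_det]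
  exact (Matrix.det_fin_three _).trans (by simp)

theorem rTensor_wedge2_wedge1_single_one_single_two {l : ℂ} (t : Om1 l) :
    (wedge2 (wedge1 (Pi.single 1 1) (Pi.single 2 1))).rTensor (Uenv l) t =
      exteriorPower.ιMulti ℂ 3 (Pi.basisFun ℂ (Fin 3)) ⊗ₜ[ℂ] Om1.coeff 0 t := by
  induction t using TensorProduct.induction_on with
  | zero => simp
  | tmul w u => simp [wedge2_wedge1_single_one_single_two, TensorProduct.smul_tmul]
  | add s t hs ht => simp [hs, ht, TensorProduct.tmul_add]

theorem deRham_H3_general (l : ℂ)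
    (Φ : Uenv l →ₐ[ℂ] Module.End ℂ (Om1 l))
    (hΦ : ∀ x : G l, Φ (iotaU l x) = lActVec l x)
    (d : Uenv l →ₗ[ℂ] Om1 l)
    (hd1 : d 1 = 0) (hdx : ∀ a : Fin 3, d (Xgen l a) = dx l a)
    (hleib : ∀ u v : Uenv l, d (u * v) = Φ u (d v) + rAct l v (d u))
    (D2 : Om2 l →ₗ[ℂ] Om3 l)
    (hD2 : ∀ (b : ⋀[ℂ]^2 V3) (u : Uenv l),
      D2 (b ⊗ₜ[ℂ] u) = LinearMap.rTensor (Uenv l) (wedge2 b) (d u)) :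
    Function.Surjective D2 := by
  have hτ (u : Uenv l) :
      exteriorPower.ιMulti ℂ 3 (Pi.basisFun ℂ (Fin 3)) ⊗ₜ[ℂ] u ∈ LinearMap.range D2 := by
    obtain ⟨v, rfl⟩ := partialDeriv_zero_surjective hΦ hd1 hdx hleib u
    exact ⟨wedge1 (Pi.single 1 1) (Pi.single 2 1) ⊗ₜ[ℂ] v, by
      rw [hD2, rTensor_wedge2_wedge1_single_one_single_two]; rfl⟩
  rw [← LinearMap.range_eq_top, eq_top_iff]
  rintro t -
  induction t using TensorProduct.induction_on with
  | zero => exact zero_mem _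
  | tmul b u =>
    obtain ⟨c, rfl⟩ := exteriorPower.exists_eq_smul_ιMulti_basis (Pi.basisFun ℂ (Fin 3)) b
    rw [← TensorProduct.smul_tmul']
    exact Submodule.smul_mem _ c (hτ u)
  | add s t hs ht => exact add_mem hs ht

/-- Degree-3 noncommutative de Rham cohomology of `ℝ³_λ`: every 3-form is exact
(`d₂ : Ω² → Ω³` is surjective), i.e. `H³ = {0}`. -/
theorem deRham_H3 (l : ℂ)
    (Φ : Uenv l →ₐ[ℂ] Module.End ℂ (Om1 l))
    (hΦ : ∀ x : G l, Φ (iotaU l x) = lActVec l x)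
    (d : Uenv l →ₗ[ℂ] Om1 l)
    (hd1 : d 1 = 0) (hdx : ∀ a : Fin 3, d (Xgen l a) = dx l a)
    (hleib : ∀ u v : Uenv l, d (u * v) = Φ u (d v) + rAct l v (d u))
    (D1 : Om1 l →ₗ[ℂ] Om2 l)
    (hD1 : ∀ (v : V3) (u : Uenv l),
      D1 (v ⊗ₜ[ℂ] u) = LinearMap.rTensor (Uenv l) (wedge1 v) (d u))
    (D2 : Om2 l →ₗ[ℂ] Om3 l)
    (hD2 : ∀ (b : ⋀[ℂ]^2 V3) (u : Uenv l),
      D2 (b ⊗ₜ[ℂ] u) = LinearMap.rTensor (Uenv l) (wedge2 b) (d u)) :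
    Function.Surjective D2 :=
  deRham_H3_general l Φ hΦ d hd1 hdx hleib D2 hD2
end
end

section
/- For every λ ∈ ℂ and all a, b ∈ {1,2,3}, the element x_a² − x_b² ∈ U_λ satisfies □(x_a² − x_b²) = 0, where □ is the wave operator. -/
noncomputable section
open TensorProduct

attribute [local instance] LieRing.ofAssociativeRing

/-!
Since `x_c` acts on `Ω¹` by `ρ(x_c) ⊗ 1 + 1 ⊗ x_c`, the Leibniz rule gives
`d(x_c²) = ρ(x_c)ω_c ⊗ 1 + 2 dx_c·x_c`, where `ρ(x_c)ω_c` vanishes unless `c = 1`, in which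
case it is `-λ ω₁`. Hence `∂ᵉ(x_c²) = 2δᵉᶜ x_c + const`, the constants are killed by the second
derivative, and `□(x_c²) = 2` for every `c`; the differences of these squares are therefore
harmonic.
-/

def omegaCoord : Fin 3 → (V3 →ₗ[ℂ] ℂ) :=
  ![-(LinearMap.proj 2), LinearMap.proj 0, LinearMap.proj 1]

def formCoeff (l : ℂ) (e : Fin 3) : Om1 l →ₗ[ℂ] Uenv l :=
  (TensorProduct.lid ℂ (Uenv l)).toLinearMap ∘ₗ LinearMap.rTensor (Uenv l) (omegaCoord e)

lemma formCoeff_tmul (l : ℂ) (e : Fin 3) (v : V3) (u : Uenv l) :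
    formCoeff l e (v ⊗ₜ[ℂ] u) = omegaCoord e v • u := by
  simp [formCoeff]

lemma omegaCoord_omegaV (e a : Fin 3) : omegaCoord e (omegaV a) = if e = a then 1 else 0 := by
  fin_cases e <;> fin_cases a <;> simp [omegaCoord, omegaV]

lemma formCoeff_rAct_dx (l : ℂ) (e a : Fin 3) (w : Uenv l) :
    formCoeff l e (rAct l w (dx l a)) = if e = a then w else 0 := by
  simp only [rAct, dx, LinearMap.lTensor_tmul, LinearMap.mulRight_apply, one_mul,
    formCoeff_tmul, omegaCoord_omegaV]
  split <;> simp

lemma formCoeff_d_Xgen (l : ℂ) (d : Uenv l →ₗ[ℂ] Om1 l)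
    (hdx : ∀ a : Fin 3, d (Xgen l a) = dx l a) (e c : Fin 3) :
    formCoeff l e (d (Xgen l c)) = if e = c then 1 else 0 := by
  rw [hdx, dx, formCoeff_tmul, omegaCoord_omegaV]
  split <;> simp

lemma eq_formCoeff_of_forall_eq_sum (l : ℂ) (d : Uenv l →ₗ[ℂ] Om1 l)
    (P : Fin 3 → Uenv l → Uenv l)
    (hP : ∀ f : Uenv l,
      d f = rAct l (P 0 f) (dx l 0) + rAct l (P 1 f) (dx l 1) + rAct l (P 2 f) (dx l 2))
    (e : Fin 3) (f : Uenv l) : P e f = formCoeff l e (d f) := by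
  rw [hP f]
  simp only [map_add, formCoeff_rAct_dx]
  fin_cases e <;> simp

lemma rhoLin_xvec (l : ℂ) (a : Fin 3) : rhoLin l (xvec l a) = rhoM l a := by
  fin_cases a <;> simp [rhoLin, xvec]

lemma omegaCoord_rhoM_omegaV (l : ℂ) (e a : Fin 3) :
    omegaCoord e ((rhoM l a).mulVec (omegaV a)) = if e = 0 ∧ a = 0 then -l else 0 := by
  fin_cases e <;> fin_cases a <;>
    simp [omegaCoord, rhoM, omegaV, Matrix.mulVec, dotProduct, Pi.single_apply, Matrix.single]

lemma d_Xgen_sq (l : ℂ) (Φ : Uenv l →ₐ[ℂ] Module.End ℂ (Om1 l))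
    (hΦ : ∀ x : G l, Φ (iotaU l x) = lActVec l x) (d : Uenv l →ₗ[ℂ] Om1 l)
    (hdx : ∀ a : Fin 3, d (Xgen l a) = dx l a)
    (hleib : ∀ u v : Uenv l, d (u * v) = Φ u (d v) + rAct l v (d u)) (c : Fin 3) :
    d (Xgen l c ^ 2) = (rhoM l c).mulVec (omegaV c) ⊗ₜ[ℂ] (1 : Uenv l)
      + (2 : ℂ) • (omegaV c ⊗ₜ[ℂ] Xgen l c) := by
  rw [sq, hleib, show Φ (Xgen l c) = lActVec l (xvec l c) from hΦ _, hdx]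
  simp [lActVec, rAct, dx, rhoLin_xvec, Xgen, two_smul, add_assoc]

lemma formCoeff_d_Xgen_sq (l : ℂ) (Φ : Uenv l →ₐ[ℂ] Module.End ℂ (Om1 l))
    (hΦ : ∀ x : G l, Φ (iotaU l x) = lActVec l x) (d : Uenv l →ₗ[ℂ] Om1 l)
    (hdx : ∀ a : Fin 3, d (Xgen l a) = dx l a)
    (hleib : ∀ u v : Uenv l, d (u * v) = Φ u (d v) + rAct l v (d u)) (e c : Fin 3) :
    formCoeff l e (d (Xgen l c ^ 2)) =
      (if e = 0 ∧ c = 0 then -l else 0) • (1 : Uenv l)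
        + (if e = c then (2 : ℂ) else 0) • Xgen l c := by
  rw [d_Xgen_sq l Φ hΦ d hdx hleib, map_add, map_smul, formCoeff_tmul, formCoeff_tmul,
    omegaCoord_rhoM_omegaV, omegaCoord_omegaV]
  split <;> simp

lemma sum_formCoeff_d_formCoeff_d_Xgen_sq (l : ℂ) (Φ : Uenv l →ₐ[ℂ] Module.End ℂ (Om1 l))
    (hΦ : ∀ x : G l, Φ (iotaU l x) = lActVec l x) (d : Uenv l →ₗ[ℂ] Om1 l)
    (hd1 : d 1 = 0) (hdx : ∀ a : Fin 3, d (Xgen l a) = dx l a)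
    (hleib : ∀ u v : Uenv l, d (u * v) = Φ u (d v) + rAct l v (d u)) (c : Fin 3) :
    ∑ e : Fin 3, formCoeff l e (d (formCoeff l e (d (Xgen l c ^ 2)))) = 2 := by
  simp only [formCoeff_d_Xgen_sq l Φ hΦ d hdx hleib, map_add, map_smul, hd1,
    formCoeff_d_Xgen l d hdx, smul_zero, zero_add]
  fin_cases c <;> simp [two_smul, one_add_one_eq_two]

/-- The differences of squares `x_a² − x_b²` are massless modes: `□(x_a² − x_b²) = 0`.
Here the partial derivatives `∂ᵃ` are defined by `d f = Σ_a dx_a·∂ᵃf` and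
`□f = Σ_a ∂ᵃ∂ᵃf`. -/
theorem wave_operator_kills_difference_of_squares (l : ℂ)
    (Φ : Uenv l →ₐ[ℂ] Module.End ℂ (Om1 l))
    (hΦ : ∀ x : G l, Φ (iotaU l x) = lActVec l x)
    (d : Uenv l →ₗ[ℂ] Om1 l)
    (hd1 : d 1 = 0) (hdx : ∀ a : Fin 3, d (Xgen l a) = dx l a)
    (hleib : ∀ u v : Uenv l, d (u * v) = Φ u (d v) + rAct l v (d u))
    (P : Fin 3 → Uenv l → Uenv l)
    (hP : ∀ f : Uenv l,
      d f = rAct l (P 0 f) (dx l 0) + rAct l (P 1 f) (dx l 1) + rAct l (P 2 f) (dx l 2))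
    (a b : Fin 3) :
    (∑ e : Fin 3, P e (P e (Xgen l a ^ 2 - Xgen l b ^ 2))) = 0 := by
  simp only [eq_formCoeff_of_forall_eq_sum l d P hP, map_sub, Finset.sum_sub_distrib,
    sum_formCoeff_d_formCoeff_d_Xgen_sq l Φ hΦ d hd1 hdx hleib, sub_self]
end
end

section
/- For every λ ∈ ℂ and all a, b ∈ {1,2,3} with a ≠ b, the 1-form A := dx_a·x_b ∈ Ω¹ has field strength F := d₁(A) = (ω_a ∧ ω_b) ⊗ 1 (i.e. F = dx_a ∧ dx_b), and A is a zero mode of the Maxwell operator: *(d₁(*(d₁(A)))) = 0, where □₁ = *d*d is the Maxwell wave operator on 1-forms. -/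
noncomputable section
open TensorProduct

attribute [local instance] LieRing.ofAssociativeRing

/-! Since `d₁(v ⊗ u) = (v ∧ ·)(d u)` and `d x_b = ω_b ⊗ 1`, the field strength of `dx_a · x_b` is
`(ω_a ∧ ω_b) ⊗ 1`. Its dual `*F` again has constant coefficient `1`, whatever the Hodge star is, and
`d₁` kills such forms because `d 1 = 0`. -/

section ConstantForms

variable {R A V W : Type*} [CommRing R] [Ring A] [Algebra R A]
  [AddCommGroup V] [Module R V] [AddCommGroup W] [Module R W]
  {d : A →ₗ[R] V ⊗[R] A} {D1 : V ⊗[R] A →ₗ[R] W ⊗[R] A} {wedge : V → V →ₗ[R] W}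

theorem map_tmul_one_eq_zero (hd1 : d 1 = 0)
    (hD1 : ∀ v u, D1 (v ⊗ₜ[R] u) = LinearMap.rTensor A (wedge v) (d u)) (v : V) :
    D1 (v ⊗ₜ[R] (1 : A)) = 0 := by
  rw [hD1, hd1, map_zero]

theorem map_tmul_eq_tmul_one {x : A} {w : V} (hdx : d x = w ⊗ₜ[R] (1 : A))
    (hD1 : ∀ v u, D1 (v ⊗ₜ[R] u) = LinearMap.rTensor A (wedge v) (d u)) (v : V) :
    D1 (v ⊗ₜ[R] x) = wedge v w ⊗ₜ[R] (1 : A) := by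
  rw [hD1, hdx, LinearMap.rTensor_tmul]

end ConstantForms

theorem rAct_tmul (l : ℂ) (w : Uenv l) (v : V3) (u : Uenv l) :
    rAct l w (v ⊗ₜ[ℂ] u) = v ⊗ₜ[ℂ] (u * w) := rfl

theorem maxwell_zero_mode_general (l : ℂ) (a b : Fin 3)
    (d : Uenv l →ₗ[ℂ] Om1 l)
    (hd1 : d 1 = 0) (hdx : ∀ a : Fin 3, d (Xgen l a) = dx l a)
    (D1 : Om1 l →ₗ[ℂ] Om2 l)
    (hD1 : ∀ (v : V3) (u : Uenv l),
      D1 (v ⊗ₜ[ℂ] u) = LinearMap.rTensor (Uenv l) (wedge1 v) (d u))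
    (S2 : ⋀[ℂ]^2 V3 →ₗ[ℂ] V3) :
    D1 (rAct l (Xgen l b) (dx l a)) = (wedge1 (omegaV a) (omegaV b)) ⊗ₜ[ℂ] (1 : Uenv l) ∧
    LinearMap.rTensor (Uenv l) S2
        (D1 (LinearMap.rTensor (Uenv l) S2 (D1 (rAct l (Xgen l b) (dx l a))))) = 0 := by
  have hF : D1 (rAct l (Xgen l b) (dx l a)) = wedge1 (omegaV a) (omegaV b) ⊗ₜ[ℂ] (1 : Uenv l) := by
    rw [dx, rAct_tmul, one_mul]
    exact map_tmul_eq_tmul_one (hdx b) hD1 _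
  refine ⟨hF, ?_⟩
  rw [hF, LinearMap.rTensor_tmul, map_tmul_one_eq_zero hd1 hD1, map_zero]

/-- For `a ≠ b`, the 1-form `A = dx_a·x_b` has field strength
`F = d₁(A) = (ω_a ∧ ω_b) ⊗ 1 = dx_a ∧ dx_b`, and `A` is a zero mode of the Maxwell
operator `□₁ = *d*d` on 1-forms, where the Hodge star `* : Λ²ℂ³ → Λ¹ℂ³` is determined by
`*(ω₂∧ω₃) = ω₁`, `*(ω₃∧ω₁) = ω₂`, `*(ω₁∧ω₂) = ω₃`. -/
theorem maxwell_zero_mode (l : ℂ) (a b : Fin 3) (hab : a ≠ b)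
    (Φ : Uenv l →ₐ[ℂ] Module.End ℂ (Om1 l))
    (hΦ : ∀ x : G l, Φ (iotaU l x) = lActVec l x)
    (d : Uenv l →ₗ[ℂ] Om1 l)
    (hd1 : d 1 = 0) (hdx : ∀ a : Fin 3, d (Xgen l a) = dx l a)
    (hleib : ∀ u v : Uenv l, d (u * v) = Φ u (d v) + rAct l v (d u))
    (D1 : Om1 l →ₗ[ℂ] Om2 l)
    (hD1 : ∀ (v : V3) (u : Uenv l),
      D1 (v ⊗ₜ[ℂ] u) = LinearMap.rTensor (Uenv l) (wedge1 v) (d u))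
    (S2 : ⋀[ℂ]^2 V3 →ₗ[ℂ] V3)
    (hS2a : S2 (wedge1 (omegaV 1) (omegaV 2)) = omegaV 0)
    (hS2b : S2 (wedge1 (omegaV 2) (omegaV 0)) = omegaV 1)
    (hS2c : S2 (wedge1 (omegaV 0) (omegaV 1)) = omegaV 2) :
    D1 (rAct l (Xgen l b) (dx l a)) = (wedge1 (omegaV a) (omegaV b)) ⊗ₜ[ℂ] (1 : Uenv l) ∧
    LinearMap.rTensor (Uenv l) S2
        (D1 (LinearMap.rTensor (Uenv l) S2 (D1 (rAct l (Xgen l b) (dx l a))))) = 0 :=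
  maxwell_zero_mode_general l a b d hd1 hdx D1 hD1 S2
end
end
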